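/- Let (A,C,ψ) be an entwining structure, let ((R^•,D^•),C,Ψ^•) be a dg-entwining structure, and let T: C ⊗ R^n → k be an n-dimensional closed graded entwined trace, i.e., T(c ⊗ D(r)) = 0 for r ∈ R^{n-1} and T(c ⊗ r'r'') = (-1)^{ij} T(c^Ψ ⊗ r'' r'_Ψ) for r' ∈ R^i, r'' ∈ R^j with i+j=n. Suppose ρ: A → R⁰ is an algebra map making this an entwined cycle over (A,C,ψ). Then the character g(c ⊗ a₁ ⊗ ... ⊗ a_{n+1}) := T(c ⊗ ρ(a₁)·D(ρ(a₂))⋯D(ρ(a_{n+1}))) satisfies the cyclicity condition g(c ⊗ a₁ ⊗ ... ⊗ a_{n+1}) = (-1)^n g(c^ψ ⊗ a₂ ⊗ ... ⊗ a_{n+1} ⊗ a_{1ψ}). -/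
import Mathlib


open TensorProduct

/-- An entwining structure `(A, C, ψ)` over a field `k`: a unital `k`-algebra `A`,
a counital `k`-coalgebra `C` and a `k`-linear map `ψ : C ⊗ A → A ⊗ C` satisfying the
entwining axioms of Brzeziński–Majid. -/
structure Entwining (k A C : Type) [Field k] [Ring A] [Algebra k A]
    [AddCommGroup C] [Module k C] [Coalgebra k C] : Type where
  ψ : C ⊗[k] A →ₗ[k] A ⊗[k] C
  mul_compat : ψ ∘ₗ TensorProduct.map (LinearMap.id : C →ₗ[k] C) (LinearMap.mul' k A) =
    TensorProduct.map (LinearMap.mul' k A) (LinearMap.id : C →ₗ[k] C)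
      ∘ₗ (TensorProduct.assoc k A A C).symm.toLinearMap
      ∘ₗ TensorProduct.map (LinearMap.id : A →ₗ[k] A) ψ
      ∘ₗ (TensorProduct.assoc k A C A).toLinearMap
      ∘ₗ TensorProduct.map ψ (LinearMap.id : A →ₗ[k] A)
      ∘ₗ (TensorProduct.assoc k C A A).symm.toLinearMap
  comul_compat : TensorProduct.map (LinearMap.id : A →ₗ[k] A)
        (CoalgebraStruct.comul (R := k) (A := C)) ∘ₗ ψ =
    (TensorProduct.assoc k A C C).toLinearMap
      ∘ₗ TensorProduct.map ψ (LinearMap.id : C →ₗ[k] C)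
      ∘ₗ (TensorProduct.assoc k C A C).symm.toLinearMap
      ∘ₗ TensorProduct.map (LinearMap.id : C →ₗ[k] C) ψ
      ∘ₗ (TensorProduct.assoc k C C A).toLinearMap
      ∘ₗ TensorProduct.map (CoalgebraStruct.comul (R := k) (A := C)) (LinearMap.id : A →ₗ[k] A)
  counit_compat : (TensorProduct.rid k A).toLinearMap
      ∘ₗ TensorProduct.map (LinearMap.id : A →ₗ[k] A)
        (CoalgebraStruct.counit (R := k) (A := C)) ∘ₗ ψ =
    (TensorProduct.lid k A).toLinearMap
      ∘ₗ TensorProduct.map (CoalgebraStruct.counit (R := k) (A := C)) (LinearMap.id : A →ₗ[k] A)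
  unit_compat : ∀ c : C, ψ (c ⊗ₜ[k] (1 : A)) = (1 : A) ⊗ₜ[k] c

/-- An entwining structure with a possibly non-unital algebra `R`: all the axioms of an
entwining structure except the unitality axiom `ψ(c ⊗ 1) = 1 ⊗ c`. -/
structure NEntwining (k R C : Type) [Field k] [NonUnitalRing R] [Module k R]
    [SMulCommClass k R R] [IsScalarTower k R R]
    [AddCommGroup C] [Module k C] [Coalgebra k C] : Type where
  ψ : C ⊗[k] R →ₗ[k] R ⊗[k] C
  mul_compat : ψ ∘ₗ TensorProduct.map (LinearMap.id : C →ₗ[k] C) (LinearMap.mul' k R) =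
    TensorProduct.map (LinearMap.mul' k R) (LinearMap.id : C →ₗ[k] C)
      ∘ₗ (TensorProduct.assoc k R R C).symm.toLinearMap
      ∘ₗ TensorProduct.map (LinearMap.id : R →ₗ[k] R) ψ
      ∘ₗ (TensorProduct.assoc k R C R).toLinearMap
      ∘ₗ TensorProduct.map ψ (LinearMap.id : R →ₗ[k] R)
      ∘ₗ (TensorProduct.assoc k C R R).symm.toLinearMap
  comul_compat : TensorProduct.map (LinearMap.id : R →ₗ[k] R)
        (CoalgebraStruct.comul (R := k) (A := C)) ∘ₗ ψ =
    (TensorProduct.assoc k R C C).toLinearMap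
      ∘ₗ TensorProduct.map ψ (LinearMap.id : C →ₗ[k] C)
      ∘ₗ (TensorProduct.assoc k C R C).symm.toLinearMap
      ∘ₗ TensorProduct.map (LinearMap.id : C →ₗ[k] C) ψ
      ∘ₗ (TensorProduct.assoc k C C R).toLinearMap
      ∘ₗ TensorProduct.map (CoalgebraStruct.comul (R := k) (A := C)) (LinearMap.id : R →ₗ[k] R)
  counit_compat : (TensorProduct.rid k R).toLinearMap
      ∘ₗ TensorProduct.map (LinearMap.id : R →ₗ[k] R)
        (CoalgebraStruct.counit (R := k) (A := C)) ∘ₗ ψ =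
    (TensorProduct.lid k R).toLinearMap
      ∘ₗ TensorProduct.map (CoalgebraStruct.counit (R := k) (A := C)) (LinearMap.id : R →ₗ[k] R)

/-- The product `ρ(a₁) · D(ρ(a₂)) ⋯ D(ρ(a_{n+1}))` appearing in the character of an
entwined cycle. -/
noncomputable def charProd {k A R : Type} [Field k] [Ring A] [Algebra k A]
    [NonUnitalRing R] [Module k R] (ρ : A →ₗ[k] R) (D : R →ₗ[k] R) {n : ℕ}
    (v : Fin (n + 1) → A) : R :=
  (List.ofFn fun i : Fin n => D (ρ (v i.succ))).foldl (· * ·) (ρ (v 0))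

section CharacterHelpers

variable {k R : Type} [Field k] [NonUnitalRing R] [Module k R]
  [SMulCommClass k R R] [IsScalarTower k R R]

private lemma foldl_mem (𝒜 : ℕ → Submodule k R)
    (hmul : ∀ (i j : ℕ) (x y : R), x ∈ 𝒜 i → y ∈ 𝒜 j → x * y ∈ 𝒜 (i + j)) :
    ∀ (l : List R), (∀ y ∈ l, y ∈ 𝒜 1) → ∀ (i : ℕ) (x : R), x ∈ 𝒜 i →
      l.foldl (· * ·) x ∈ 𝒜 (i + l.length) := by
  intro l
  induction l with
  | nil => intro _ i x hx; simpa using hx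
  | cons y l ih =>
    intro hmem i x hx
    have h1 : x * y ∈ 𝒜 (i + 1) := hmul i 1 x y hx (hmem y (by simp))
    have h2 := ih (fun z hz => hmem z (by simp [hz])) (i + 1) (x * y) h1
    have hlen : i + 1 + l.length = i + (y :: l).length := by simp; omega
    rw [hlen] at h2
    simpa using h2

private lemma D_foldl (𝒜 : ℕ → Submodule k R)
    (hmul : ∀ (i j : ℕ) (x y : R), x ∈ 𝒜 i → y ∈ 𝒜 j → x * y ∈ 𝒜 (i + j))
    (D : R →ₗ[k] R)
    (hLeibniz : ∀ (i : ℕ) (x : R), x ∈ 𝒜 i → ∀ y : R,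
      D (x * y) = D x * y + ((-1 : k) ^ i) • (x * D y))
    (l : List R) (hl : ∀ y ∈ l, y ∈ 𝒜 1 ∧ D y = 0) :
    ∀ (i : ℕ) (x : R), x ∈ 𝒜 i → D (l.foldl (· * ·) x) = l.foldl (· * ·) (D x) := by
  induction l using List.reverseRecOn with
  | nil => intro i x _; rfl
  | append_singleton l y ih =>
    intro i x hx
    have hl' : ∀ z ∈ l, z ∈ 𝒜 1 ∧ D z = 0 := fun z hz => hl z (by simp [hz])
    have hy : y ∈ 𝒜 1 ∧ D y = 0 := hl y (by simp)
    have hmem : l.foldl (· * ·) x ∈ 𝒜 (i + l.length) :=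
      foldl_mem 𝒜 hmul l (fun z hz => (hl' z hz).1) i x hx
    rw [List.foldl_append, List.foldl_append]
    simp only [List.foldl_cons, List.foldl_nil]
    rw [hLeibniz (i + l.length) _ hmem y, hy.2, ih hl' i x hx]
    simp

end CharacterHelpers

/-- Let `((R,D),C,Ψ)` be a dg-entwining structure (graded by
submodules `𝒜 i ⊆ R`), `ρ : A → R⁰` an algebra map making it a dg-entwining structure
over `(A,C,ψ)`, and `T` an `n`-dimensional closed graded entwined trace. Then the
character `g(c ⊗ a₁ ⊗ ⋯ ⊗ a_{n+1}) = T(c ⊗ ρ(a₁)·D(ρ(a₂))⋯D(ρ(a_{n+1})))` satisfies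
the cyclicity condition
`g(c ⊗ a₁ ⊗ ⋯ ⊗ a_{n+1}) = (-1)ⁿ g(c^ψ ⊗ a₂ ⊗ ⋯ ⊗ a_{n+1} ⊗ a_{1ψ})`. -/
theorem character_is_cyclic
    {k A C R : Type}
    [Field k] [Ring A] [Algebra k A] [AddCommGroup C] [Module k C] [Coalgebra k C]
    [NonUnitalRing R] [Module k R] [SMulCommClass k R R] [IsScalarTower k R R]
    (e : Entwining k A C) (E : NEntwining k R C)
    (𝒜 : ℕ → Submodule k R)
    (hmul : ∀ (i j : ℕ) (x y : R), x ∈ 𝒜 i → y ∈ 𝒜 j → x * y ∈ 𝒜 (i + j))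
    (D : R →ₗ[k] R)
    (hDdeg : ∀ (i : ℕ) (x : R), x ∈ 𝒜 i → D x ∈ 𝒜 (i + 1))
    (hDD : D ∘ₗ D = 0)
    (hLeibniz : ∀ (i : ℕ) (x : R), x ∈ 𝒜 i → ∀ y : R,
      D (x * y) = D x * y + ((-1 : k) ^ i) • (x * D y))
    (hchain : TensorProduct.map D (LinearMap.id : C →ₗ[k] C) ∘ₗ E.ψ =
      E.ψ ∘ₗ TensorProduct.map (LinearMap.id : C →ₗ[k] C) D)
    (hdeg0 : ∀ (i : ℕ) (c : C) (r : R), r ∈ 𝒜 i →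
      E.ψ (c ⊗ₜ[k] r) ∈ LinearMap.range
        (TensorProduct.map (𝒜 i).subtype (LinearMap.id : C →ₗ[k] C)))
    (ρ : A →ₗ[k] R)
    (hρmul : ∀ a b : A, ρ (a * b) = ρ a * ρ b)
    (hρ0 : ∀ a : A, ρ a ∈ 𝒜 0)
    (hρψ : TensorProduct.map ρ (LinearMap.id : C →ₗ[k] C) ∘ₗ e.ψ =
      E.ψ ∘ₗ TensorProduct.map (LinearMap.id : C →ₗ[k] C) ρ)
    (n : ℕ) (T : C ⊗[k] R →ₗ[k] k)
    (hclosed : ∀ (m : ℕ), m + 1 = n → ∀ (c : C) (r : R), r ∈ 𝒜 m → T (c ⊗ₜ[k] D r) = 0)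
    (htrace : ∀ (i j : ℕ), i + j = n → ∀ (r' r'' : R), r' ∈ 𝒜 i → r'' ∈ 𝒜 j →
      ∀ (c : C) (t : ℕ) (α : Fin t → R) (γ : Fin t → C),
        E.ψ (c ⊗ₜ[k] r') = ∑ s, α s ⊗ₜ[k] γ s →
        T (c ⊗ₜ[k] (r' * r'')) = (-1 : k) ^ (i * j) * ∑ s, T (γ s ⊗ₜ[k] (r'' * α s))) :
    ∀ (c : C) (v : Fin (n + 1) → A) (t : ℕ) (α : Fin t → A) (γ : Fin t → C),
      e.ψ (c ⊗ₜ[k] v 0) = ∑ s, α s ⊗ₜ[k] γ s →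
      T (c ⊗ₜ[k] charProd ρ D v) = (-1 : k) ^ n *
        ∑ s, T (γ s ⊗ₜ[k] charProd ρ D
          (Function.update (fun j : Fin (n + 1) => v (j + 1)) (Fin.last n) (α s))) := by
  intro c v t α γ hψ
  -- the expansion of E.ψ (c ⊗ ρ (v 0)) induced by hψ
  have hΨ : E.ψ (c ⊗ₜ[k] ρ (v 0)) = ∑ s, ρ (α s) ⊗ₜ[k] γ s := by
    have h := congrFun (congrArg DFunLike.coe hρψ) (c ⊗ₜ[k] v 0)
    simp only [LinearMap.comp_apply, TensorProduct.map_tmul, LinearMap.id_coe, id_eq] at h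
    rw [← h, hψ, map_sum]
    simp [TensorProduct.map_tmul]
  cases n with
  | zero =>
    -- n = 0 : use r' = ρ (v 0), r'' = ρ 1
    have htr := htrace 0 0 rfl (ρ (v 0)) (ρ 1) (hρ0 _) (hρ0 _) c t
      (fun s => ρ (α s)) γ hΨ
    have h1 : ρ (v 0) * ρ (1 : A) = ρ (v 0) := by rw [← hρmul]; simp
    have h2 : ∀ s, ρ (1 : A) * ρ (α s) = ρ (α s) := by
      intro s; rw [← hρmul]; simp
    simp only [h1, h2] at htr
    simpa [charProd] using htr
  | succ m =>
    -- n = m + 1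
    set l' : List R := List.ofFn fun i : Fin m => D (ρ (v i.succ.succ)) with hl'def
    have hl'mem : ∀ y ∈ l', y ∈ 𝒜 1 ∧ D y = 0 := by
      intro y hy
      rw [hl'def, List.mem_ofFn] at hy
      obtain ⟨i, rfl⟩ := hy
      exact ⟨by simpa using hDdeg 0 _ (hρ0 _),
        by have := congrFun (congrArg DFunLike.coe hDD) (ρ (v i.succ.succ)); simpa using this⟩
    set x₁ : R := D (ρ (v 1)) with hx₁def
    have hx₁ : x₁ ∈ 𝒜 1 := by simpa using hDdeg 0 _ (hρ0 _)
    set Q : R := l'.foldl (· * ·) x₁ with hQdef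
    set ω : R := l'.foldl (· * ·) (ρ (v 1)) with hωdef
    have hQmem : Q ∈ 𝒜 (m + 1) := by
      have := foldl_mem 𝒜 hmul l' (fun y hy => (hl'mem y hy).1) 1 x₁ hx₁
      simpa [hl'def, Nat.add_comm] using this
    have hωmem : ω ∈ 𝒜 m := by
      have := foldl_mem 𝒜 hmul l' (fun y hy => (hl'mem y hy).1) 0 (ρ (v 1)) (hρ0 _)
      simpa [hl'def] using this
    have hDω : D ω = Q :=
      D_foldl 𝒜 hmul D hLeibniz l' hl'mem 0 (ρ (v 1)) (hρ0 _)
    -- decompose charProd ρ D v = ρ (v 0) * Q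
    have hsplit : charProd ρ D v = ρ (v 0) * Q := by
      rw [charProd, List.ofFn_succ]
      simp only [List.foldl_cons]
      rw [List.foldl_assoc]
      congr 1
    -- identify charProd of the cyclically shifted vector
    have hw : ∀ s, charProd ρ D
        (Function.update (fun j : Fin (m + 1 + 1) => v (j + 1)) (Fin.last (m + 1)) (α s))
        = ω * D (ρ (α s)) := by
      intro s
      set w := Function.update (fun j : Fin (m + 1 + 1) => v (j + 1)) (Fin.last (m + 1)) (α s)
        with hwdef
      have hw0 : w 0 = v 1 := by
        rw [hwdef, Function.update_of_ne (by simp [Fin.ext_iff])]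
        norm_num
      have hwlast : w (Fin.last (m + 1)) = α s := by
        rw [hwdef, Function.update_self]
      have hwi : ∀ i : Fin m, w i.castSucc.succ = v i.succ.succ := by
        intro i
        have hne : (i.castSucc.succ : Fin (m + 1 + 1)) ≠ Fin.last (m + 1) := by
          simp only [ne_eq, Fin.ext_iff, Fin.val_succ, Fin.coe_castSucc, Fin.val_last]
          omega
        rw [hwdef, Function.update_of_ne hne]
        congr 1
        apply Fin.ext
        rw [Fin.val_add]
        simp only [Fin.val_succ, Fin.coe_castSucc, Fin.val_one]
        rw [Nat.mod_eq_of_lt (by omega)]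
      rw [charProd, List.ofFn_succ']
      simp only [List.concat_eq_append, List.foldl_append, List.foldl_cons, List.foldl_nil]
      rw [show (List.ofFn fun i : Fin m => D (ρ (w i.castSucc.succ))) = l' from by
        rw [hl'def]; exact congrArg List.ofFn (funext fun i => by rw [hwi i])]
      rw [hw0, Fin.succ_last, hwlast, ← hωdef]
    -- apply the trace property
    have htr := htrace 0 (m + 1) (by omega) (ρ (v 0)) Q (hρ0 _) hQmem c t
      (fun s => ρ (α s)) γ hΨ
    simp only [Nat.zero_mul, pow_zero, one_mul] at htr
    rw [hsplit, htr]
    -- now rewrite each summand using closedness and Leibniz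
    rw [Finset.mul_sum]
    apply Finset.sum_congr rfl
    intro s _
    have hclose : T (γ s ⊗ₜ[k] D (ω * ρ (α s))) = 0 := by
      apply hclosed m rfl
      simpa using hmul m 0 ω (ρ (α s)) hωmem (hρ0 _)
    have hleib := hLeibniz m ω hωmem (ρ (α s))
    rw [hDω] at hleib
    have hQs : Q * ρ (α s) = D (ω * ρ (α s)) - ((-1 : k) ^ m) • (ω * D (ρ (α s))) := by
      rw [hleib]; abel
    rw [hQs, TensorProduct.tmul_sub, map_sub, hclose, TensorProduct.tmul_smul, map_smul,
      hw s]
    simp only [zero_sub, smul_eq_mul, pow_succ]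
    ring
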